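/- Random-batch collision invariants: let c_{p,q} ∈ ℝ be any symmetric coefficients (c_{p,q} = c_{q,p}), and define the batched collision velocity field U^c_p = Σ_{q=1}^N w_q c_{p,q} ψ(x_p − x_q) A(v_p − v_q) b_{p,q}. Then the momentum and kinetic-energy invariants still hold: Σ_{p=1}^N w_p U^c_p = 0 and Σ_{p=1}^N w_p v_p · U^c_p = 0. -/
import Mathlib


open Matrix
open scoped Classical

/-- The Landau collision kernel `A(z) = C ‖z‖^(γ+2) (I − z zᵀ/‖z‖²)` for `z ≠ 0`,
with the convention `A(0) = 0`. -/
noncomputable def landauA (d : ℕ) (C γ : ℝ) (z : Fin d → ℝ) :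
    Matrix (Fin d) (Fin d) ℝ :=
  if z = 0 then 0
  else (C * Real.sqrt (z ⬝ᵥ z) ^ (γ + 2)) •
    (1 - (z ⬝ᵥ z)⁻¹ • Matrix.vecMulVec z z)

lemma landauA_neg (d : ℕ) (C γ : ℝ) (z : Fin d → ℝ) :
    landauA d C γ (-z) = landauA d C γ z := by
  unfold landauA
  have h1 : (-z : Fin d → ℝ) = 0 ↔ z = 0 := neg_eq_zero
  have h2 : (-z) ⬝ᵥ (-z) = z ⬝ᵥ z := by simp
  have h3 : Matrix.vecMulVec (-z) (-z) = Matrix.vecMulVec z z := by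
    ext i j; simp [Matrix.vecMulVec_apply]
  by_cases hz : z = 0
  · simp [hz]
  · rw [if_neg (by simpa [h1] using hz), if_neg hz, h2, h3]

lemma vecMulVec_mulVec' {d : ℕ} (z b : Fin d → ℝ) :
    (Matrix.vecMulVec z z).mulVec b = (z ⬝ᵥ b) • z := by
  funext i
  simp only [Matrix.mulVec, Matrix.vecMulVec_apply, dotProduct,
    Pi.smul_apply, smul_eq_mul, Finset.mul_sum, mul_assoc]
  rw [Finset.sum_mul]
  exact Finset.sum_congr rfl fun j _ => by ring

lemma dot_landauA_mulVec (d : ℕ) (C γ : ℝ) (z b : Fin d → ℝ) :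
    z ⬝ᵥ (landauA d C γ z).mulVec b = 0 := by
  unfold landauA
  by_cases hz : z = 0
  · simp [hz]
  · rw [if_neg hz]
    have hzz : z ⬝ᵥ z ≠ 0 := by
      simpa [dotProduct_self_eq_zero] using hz
    rw [Matrix.smul_mulVec, dotProduct_smul, Matrix.sub_mulVec,
      dotProduct_sub, Matrix.one_mulVec, Matrix.smul_mulVec,
      dotProduct_smul, vecMulVec_mulVec']
    simp only [dotProduct_smul, smul_eq_mul]
    rw [mul_comm (z ⬝ᵥ b) (z ⬝ᵥ z), ← mul_assoc, inv_mul_cancel₀ hzz]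
    simp

lemma dotProduct_sum' {d N : ℕ} (u : Fin d → ℝ) (f : Fin N → Fin d → ℝ) :
    u ⬝ᵥ (∑ q : Fin N, f q) = ∑ q : Fin N, u ⬝ᵥ f q := by
  simp only [dotProduct, Finset.sum_apply, Finset.mul_sum]
  exact Finset.sum_comm

lemma sum_antisymm {N : ℕ} (F : Fin N → Fin N → ℝ)
    (h : ∀ p q, F q p = -F p q) :
    ∑ p : Fin N, ∑ q : Fin N, F p q = 0 := by
  have h1 : ∑ p : Fin N, ∑ q : Fin N, F p q
      = -∑ p : Fin N, ∑ q : Fin N, F p q := by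
    calc ∑ p : Fin N, ∑ q : Fin N, F p q
        = ∑ p : Fin N, ∑ q : Fin N, -F q p :=
          Finset.sum_congr rfl fun p _ => Finset.sum_congr rfl fun q _ => h q p
      _ = -∑ p : Fin N, ∑ q : Fin N, F q p := by
          rw [← Finset.sum_neg_distrib]
          exact Finset.sum_congr rfl fun p _ => by rw [← Finset.sum_neg_distrib]
      _ = -∑ p : Fin N, ∑ q : Fin N, F p q := by rw [Finset.sum_comm]
  linarith

/-- Random-batch collision invariants: for symmetric coefficients `c_{p,q}` and the
batched field `U^c_p = Σ_q w_q c_{p,q} ψ(x_p − x_q) A(v_p − v_q) b_{p,q}`, the momentum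
and kinetic-energy invariants still hold: `Σ_p w_p U^c_p = 0` and
`Σ_p w_p v_p · U^c_p = 0`. -/
theorem random_batch_invariants (dx dv N : ℕ) (C γ : ℝ) (hC : 0 < C)
    (w : Fin N → ℝ) (x : Fin N → Fin dx → ℝ) (v : Fin N → Fin dv → ℝ)
    (ψ : (Fin dx → ℝ) → ℝ) (hψ : ∀ y, ψ (-y) = ψ y)
    (b : Fin N → Fin N → Fin dv → ℝ) (hb : ∀ p q, b q p = -(b p q))
    (c : Fin N → Fin N → ℝ) (hc : ∀ p q, c p q = c q p)
    (U : Fin N → Fin dv → ℝ)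
    (hU : ∀ p, U p = ∑ q : Fin N,
      (w q * c p q * ψ (x p - x q)) • (landauA dv C γ (v p - v q)).mulVec (b p q)) :
    ∑ p : Fin N, w p • U p = 0 ∧
    ∑ p : Fin N, w p * (v p ⬝ᵥ U p) = 0 := by
  have hcoef : ∀ p q : Fin N,
      w p * c q p * ψ (x q - x p) = w p * c p q * ψ (x p - x q) := by
    intro p q
    rw [hc p q, show x q - x p = -(x p - x q) by ring, hψ]
  have hA : ∀ p q : Fin N,
      landauA dv C γ (v q - v p) = landauA dv C γ (v p - v q) := by
    intro p q
    rw [show v q - v p = -(v p - v q) by ring, landauA_neg]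
  constructor
  · -- momentum
    funext i
    show (∑ p : Fin N, w p • U p) i = (0 : Fin dv → ℝ) i
    rw [Finset.sum_apply, Pi.zero_apply]
    have expand : ∀ p : Fin N, (w p • U p) i
        = ∑ q : Fin N, (w p * (w q * c p q * ψ (x p - x q)))
            * ((landauA dv C γ (v p - v q)).mulVec (b p q) i) := by
      intro p
      rw [hU p]
      simp only [Pi.smul_apply, Finset.sum_apply, smul_eq_mul, Finset.mul_sum]
      exact Finset.sum_congr rfl fun q _ => by ring
    rw [Finset.sum_congr rfl fun p _ => expand p]
    apply sum_antisymm
    intro p q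
    rw [hb p q, hA p q, hcoef p q, Matrix.mulVec_neg]
    simp only [Pi.neg_apply]
    ring
  · -- energy
    have expand : ∀ p : Fin N, w p * (v p ⬝ᵥ U p)
        = ∑ q : Fin N, (w p * (w q * c p q * ψ (x p - x q)))
            * (v p ⬝ᵥ (landauA dv C γ (v p - v q)).mulVec (b p q)) := by
      intro p
      rw [hU p, dotProduct_sum', Finset.mul_sum]
      refine Finset.sum_congr rfl fun q _ => ?_
      rw [dotProduct_smul]
      simp only [smul_eq_mul]
      ring
    rw [Finset.sum_congr rfl fun p _ => expand p]
    apply sum_antisymm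
    intro p q
    have hdot : v q ⬝ᵥ (landauA dv C γ (v p - v q)).mulVec (b p q)
        = v p ⬝ᵥ (landauA dv C γ (v p - v q)).mulVec (b p q) := by
      have h0' : v p ⬝ᵥ (landauA dv C γ (v p - v q)).mulVec (b p q)
          - v q ⬝ᵥ (landauA dv C γ (v p - v q)).mulVec (b p q) = 0 := by
        rw [← sub_dotProduct]
        exact dot_landauA_mulVec dv C γ (v p - v q) (b p q)
      linarith
    rw [hb p q, hA p q, hcoef p q, Matrix.mulVec_neg, dotProduct_neg, hdot]
    ring
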